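/- arXiv:1311.6954 — 2 statements merged into one kernel-verified Lean document; each statement's English description precedes it below -/
import Mathlib

section
/- Let h : ℝ → ℝ be bounded and measurable, let Φh = E[h(Z)] where Z is a standard normal random variable, and let f be the solution of the standard normal Stein equation f''(w) − w f'(w) = h(w) − Φh given by f'(w) = −e^{w²/2} ∫_w^∞ (h(t) − Φh) e^{−t²/2} dt. Then sup_{w ∈ ℝ} |w f'(w)| ≤ sup_{t ∈ ℝ} |h(t) − Φh|. -/
/-! With `g t = exp (-t²/2)` and `φ = h - Φh`, the quantity to bound is
`|w| e^{w²/2} |∫_{t>w} φ g|`. Because `Φh` is the Gaussian mean of `h`, `∫ φ g = 0`, so the tail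
over `(w, ∞)` is minus the tail over `(-∞, w]`. Bounding `|φ| ≤ M` on whichever tail lies away
from the origin, the Mills-ratio inequality `|w| ∫_{tail} g ≤ g w` leaves exactly `M`. -/

open MeasureTheory ProbabilityTheory Real Filter Set Topology

lemma integrable_exp_neg_sq_div_two : Integrable fun t : ℝ ↦ exp (-t ^ 2 / 2) := by
  convert integrable_exp_neg_mul_sq (b := (1 : ℝ) / 2) (by norm_num) using 2 with t
  ring_nf

lemma integrable_mul_exp_neg_sq_div_two : Integrable fun t : ℝ ↦ t * exp (-t ^ 2 / 2) := by
  convert integrable_mul_exp_neg_mul_sq (b := (1 : ℝ) / 2) (by norm_num) using 2 with t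
  ring_nf

lemma hasDerivAt_neg_exp_neg_sq_div_two (x : ℝ) :
    HasDerivAt (fun t : ℝ ↦ -exp (-t ^ 2 / 2)) (x * exp (-x ^ 2 / 2)) x := by
  have hsq : HasDerivAt (fun t : ℝ ↦ -t ^ 2 / 2) (-x) x :=
    (((hasDerivAt_pow 2 x).neg).div_const 2).congr_deriv (by push_cast; ring)
  exact hsq.exp.neg.congr_deriv (by ring)

lemma integral_Ioi_mul_exp_neg_sq_div_two (w : ℝ) :
    ∫ t in Ioi w, t * exp (-t ^ 2 / 2) = exp (-w ^ 2 / 2) := by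
  have hlim : Tendsto (fun t : ℝ ↦ -exp (-t ^ 2 / 2)) atTop (𝓝 0) := by
    have hsq : Tendsto (fun t : ℝ ↦ -t ^ 2 / 2) atTop atBot :=
      (tendsto_neg_atTop_atBot.comp (tendsto_pow_atTop two_ne_zero)).atBot_div_const two_pos
    simpa using (tendsto_exp_atBot.comp hsq).neg
  simpa using integral_Ioi_of_hasDerivAt_of_tendsto
    (hasDerivAt_neg_exp_neg_sq_div_two w).continuousAt.continuousWithinAt
    (fun x _ ↦ hasDerivAt_neg_exp_neg_sq_div_two x)
    integrable_mul_exp_neg_sq_div_two.integrableOn hlim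

-- Mills' ratio inequality: bounding `w` by `t` under the integral makes it exact.
lemma mul_integral_Ioi_exp_neg_sq_div_two_le (w : ℝ) :
    w * ∫ t in Ioi w, exp (-t ^ 2 / 2) ≤ exp (-w ^ 2 / 2) := by
  rw [← integral_const_mul, ← integral_Ioi_mul_exp_neg_sq_div_two w]
  refine setIntegral_mono_on (integrable_exp_neg_sq_div_two.const_mul w).integrableOn
    integrable_mul_exp_neg_sq_div_two.integrableOn measurableSet_Ioi fun t ht ↦ ?_
  exact mul_le_mul_of_nonneg_right (le_of_lt ht) (exp_pos _).le

lemma neg_mul_integral_Iic_exp_neg_sq_div_two_le (w : ℝ) :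
    -w * ∫ t in Iic w, exp (-t ^ 2 / 2) ≤ exp (-w ^ 2 / 2) := by
  simpa [← integral_comp_neg_Iic] using mul_integral_Ioi_exp_neg_sq_div_two_le (-w)

lemma integral_mul_exp_neg_sq_div_two_eq_sqrt_mul_integral_gaussianReal (φ : ℝ → ℝ) :
    ∫ t, φ t * exp (-t ^ 2 / 2) = √(2 * π) * ∫ t, φ t ∂(gaussianReal 0 1) := by
  rw [integral_gaussianReal_eq_integral_smul one_ne_zero, ← integral_const_mul]
  congr 1 with t
  simp only [gaussianPDFReal, smul_eq_mul, NNReal.coe_one, mul_one, sub_zero]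
  field_simp

lemma integral_sub_integral_gaussianReal_mul_exp_neg_sq_div_two {h : ℝ → ℝ}
    (hh : Integrable h (gaussianReal 0 1)) :
    ∫ t, (h t - ∫ z, h z ∂(gaussianReal 0 1)) * exp (-t ^ 2 / 2) = 0 := by
  rw [integral_mul_exp_neg_sq_div_two_eq_sqrt_mul_integral_gaussianReal,
    integral_sub hh (integrable_const _), integral_const, probReal_univ, one_smul, sub_self,
    mul_zero]

section TailBound

variable {φ : ℝ → ℝ} {M : ℝ}

lemma abs_setIntegral_mul_exp_neg_sq_div_two_le (hφ : ∀ t, |φ t| ≤ M) (s : Set ℝ) :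
    |∫ t in s, φ t * exp (-t ^ 2 / 2)| ≤ M * ∫ t in s, exp (-t ^ 2 / 2) := by
  rw [← norm_eq_abs, ← integral_const_mul]
  refine norm_integral_le_of_norm_le (integrable_exp_neg_sq_div_two.const_mul M).integrableOn
    (ae_of_all _ fun t ↦ ?_)
  rw [norm_mul, norm_of_nonneg (exp_pos _).le]
  exact mul_le_mul_of_nonneg_right (hφ t) (exp_pos _).le

lemma abs_mul_exp_mul_setIntegral_le (hφ : ∀ t, |φ t| ≤ M) {s : Set ℝ} {w : ℝ}
    (hs : |w| * ∫ t in s, exp (-t ^ 2 / 2) ≤ exp (-w ^ 2 / 2)) :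
    |w| * exp (w ^ 2 / 2) * |∫ t in s, φ t * exp (-t ^ 2 / 2)| ≤ M := by
  have hM : 0 ≤ M := (abs_nonneg _).trans (hφ 0)
  calc |w| * exp (w ^ 2 / 2) * |∫ t in s, φ t * exp (-t ^ 2 / 2)|
      ≤ |w| * exp (w ^ 2 / 2) * (M * ∫ t in s, exp (-t ^ 2 / 2)) := by
        gcongr
        exact abs_setIntegral_mul_exp_neg_sq_div_two_le hφ s
    _ = M * exp (w ^ 2 / 2) * (|w| * ∫ t in s, exp (-t ^ 2 / 2)) := by ring
    _ ≤ M * exp (w ^ 2 / 2) * exp (-w ^ 2 / 2) := by gcongr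
    _ = M := by rw [mul_assoc, ← exp_add, neg_div, add_neg_cancel, exp_zero, mul_one]

theorem abs_mul_exp_mul_integral_Ioi_le (hφm : Measurable φ) (hφ : ∀ t, |φ t| ≤ M)
    (hφ₀ : ∫ t, φ t * exp (-t ^ 2 / 2) = 0) (w : ℝ) :
    |w * (exp (w ^ 2 / 2) * ∫ t in Ioi w, φ t * exp (-t ^ 2 / 2))| ≤ M := by
  rw [abs_mul, abs_mul, abs_of_pos (exp_pos _), ← mul_assoc]
  rcases le_or_gt 0 w with hw | hw
  · refine abs_mul_exp_mul_setIntegral_le hφ ?_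
    rw [abs_of_nonneg hw]
    exact mul_integral_Ioi_exp_neg_sq_div_two_le w
  · have hint : Integrable fun t ↦ φ t * exp (-t ^ 2 / 2) :=
      integrable_exp_neg_sq_div_two.bdd_mul hφm.aestronglyMeasurable
        (ae_of_all _ fun t ↦ (norm_eq_abs _).trans_le (hφ t))
    have hsplit :=
      intervalIntegral.integral_Iic_add_Ioi (b := w) hint.integrableOn hint.integrableOn
    rw [hφ₀, add_eq_zero_iff_neg_eq] at hsplit
    rw [← hsplit, abs_neg]
    refine abs_mul_exp_mul_setIntegral_le hφ ?_
    rw [abs_of_neg hw]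
    exact neg_mul_integral_Iic_exp_neg_sq_div_two_le w

end TailBound

/-- **Lemma 2.1, inequality (2.10).**
For `h : ℝ → ℝ` bounded and measurable, the solution `f` of the standard normal Stein
equation, with `f'(w) = -e^{w²/2} ∫_w^∞ (h(t) - Φh) e^{-t²/2} dt` where `Φh = E h(Z)`,
satisfies `sup_w |w f'(w)| ≤ sup_t |h(t) - Φh|`. -/
theorem stein_solution_wf'_bound
    (h : ℝ → ℝ) (hmeas : Measurable h) (C : ℝ) (hbd : ∀ x, |h x| ≤ C)
    (Φh : ℝ) (hΦh : Φh = ∫ z, h z ∂(gaussianReal 0 1))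
    (f : ℝ → ℝ)
    (hf' : ∀ w, deriv f w =
      -Real.exp (w ^ 2 / 2) * ∫ t in Set.Ioi w, (h t - Φh) * Real.exp (-t ^ 2 / 2)) :
    ∀ w : ℝ, |w * deriv f w| ≤ ⨆ t : ℝ, |h t - Φh| := by
  have hbdd : BddAbove (range fun t ↦ |h t - Φh|) :=
    ⟨C + |Φh|, forall_mem_range.mpr fun t ↦ (abs_sub _ _).trans (by linarith [hbd t])⟩
  have hcentered : ∫ t, (h t - Φh) * exp (-t ^ 2 / 2) = 0 := by
    subst hΦh
    exact integral_sub_integral_gaussianReal_mul_exp_neg_sq_div_two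
      (.of_bound hmeas.aestronglyMeasurable C (ae_of_all _ hbd))
  intro w
  rw [hf' w, neg_mul, mul_neg, abs_neg]
  exact abs_mul_exp_mul_integral_Ioi_le (hmeas.sub measurable_const) (le_ciSup hbdd) hcentered w
end

section
/- For every real number k ≥ 1, the inequalities 1/√k < Γ(k/2) / (√2 · Γ((k+1)/2)) < 1/√(k − 1/2) hold, where Γ denotes the Gamma function. -/
/-!
With `x = k / 2` the ratio equals `1 / √(2 G x)`, where `G = gammaRatioSq`,
`G x = (Γ(x + 1/2) / Γ x)²`, so the claim is `x - 1/4 < G x < x`. Log-convexity of `Γ` at the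
midpoints of `[x, x + 1]` and `[x - 1/2, x + 1/2]` gives the crude bounds `x - 1/2 ≤ G x ≤ x`,
and the functional equation gives `G x · (x + 1/2)² = x² · G (x + 1)`. Iterating the latter `n`
times improves the lower bound to `x - 1/4 - x / (4 (x + n))`; letting `n → ∞` and applying the
recursion once more makes both bounds strict.
-/

open Real Filter Topology

namespace Real

theorem Gamma_midpoint_sq_le_mul {x y : ℝ} (hx : 0 < x) (hy : 0 < y) :
    Gamma ((x + y) / 2) ^ 2 ≤ Gamma x * Gamma y := by
  have h := Gamma_mul_add_mul_le_rpow_Gamma_mul_rpow_Gamma hx hy one_half_pos one_half_pos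
    (add_halves 1)
  rw [← sqrt_eq_rpow, ← sqrt_eq_rpow, ← sqrt_mul (Gamma_pos_of_pos hx).le,
    show 1 / 2 * x + 1 / 2 * y = (x + y) / 2 by ring] at h
  exact (le_sqrt' (Gamma_pos_of_pos (by positivity))).1 h

end Real

noncomputable def gammaRatioSq (x : ℝ) : ℝ := (Gamma (x + 1 / 2) / Gamma x) ^ 2

section
variable {x : ℝ}

theorem gammaRatioSq_le_self (hx : 0 < x) : gammaRatioSq x ≤ x := by
  have h := Gamma_midpoint_sq_le_mul hx (by linarith : 0 < x + 1)
  rw [show (x + (x + 1)) / 2 = x + 1 / 2 by ring, Gamma_add_one hx.ne'] at h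
  rw [gammaRatioSq, div_pow, div_le_iff₀ (by have := Gamma_pos_of_pos hx; positivity)]
  linarith

theorem sub_half_le_gammaRatioSq (hx : 1 / 2 < x) : x - 1 / 2 ≤ gammaRatioSq x := by
  have hx' : 0 < x - 1 / 2 := by linarith
  have h := Gamma_midpoint_sq_le_mul hx' (by linarith : 0 < x + 1 / 2)
  have hrec : Gamma (x + 1 / 2) = (x - 1 / 2) * Gamma (x - 1 / 2) := by
    rw [← Gamma_add_one hx'.ne']; ring_nf
  rw [show (x - 1 / 2 + (x + 1 / 2)) / 2 = x by ring] at h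
  have hΓ := Gamma_pos_of_pos (by linarith : 0 < x)
  rw [gammaRatioSq, div_pow, le_div_iff₀ (by positivity)]
  calc (x - 1 / 2) * Gamma x ^ 2
      ≤ (x - 1 / 2) * (Gamma (x - 1 / 2) * Gamma (x + 1 / 2)) := by gcongr
    _ = Gamma (x + 1 / 2) ^ 2 := by rw [hrec]; ring

theorem gammaRatioSq_mul_sq (hx : 0 < x) :
    gammaRatioSq x * (x + 1 / 2) ^ 2 = x ^ 2 * gammaRatioSq (x + 1) := by
  have hΓ : Gamma (x + 1 + 1 / 2) = (x + 1 / 2) * Gamma (x + 1 / 2) := by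
    rw [← Gamma_add_one (by linarith : x + 1 / 2 ≠ 0)]; ring_nf
  have := (Gamma_pos_of_pos hx).ne'
  simp only [gammaRatioSq, hΓ, Gamma_add_one hx.ne']
  field_simp

theorem sub_quarter_sub_gammaRatioSq_le (n : ℕ) (hx : 1 / 2 < x) :
    x - 1 / 4 - gammaRatioSq x ≤ x / (4 * (x + n)) := by
  induction n generalizing x with
  | zero =>
    rw [Nat.cast_zero, add_zero, div_mul_cancel_right₀ (by linarith) 4]
    linarith [sub_half_le_gammaRatioSq hx]
  | succ n ih =>
    have hx0 : 0 < x := by linarith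
    have hrec := gammaRatioSq_mul_sq hx0
    have hD : (x + 1) - 1 / 4 - gammaRatioSq (x + 1) ≤ (x + 1) / (4 * (x + 1 + n)) :=
      ih (by linarith)
    rw [le_div_iff₀ (by positivity)] at hD ⊢
    push_cast
    nlinarith [sq_nonneg x, mul_le_mul_of_nonneg_left hD (sq_nonneg x)]

theorem sub_quarter_le_gammaRatioSq (hx : 1 / 2 < x) : x - 1 / 4 ≤ gammaRatioSq x := by
  have hlim : Tendsto (fun n : ℕ ↦ x / (4 * (x + n))) atTop (𝓝 0) :=
    tendsto_const_nhds.div_atTop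
      ((tendsto_atTop_add_const_left _ x tendsto_natCast_atTop_atTop).const_mul_atTop four_pos)
  linarith [ge_of_tendsto' hlim fun n ↦ sub_quarter_sub_gammaRatioSq_le n hx]

theorem sub_quarter_lt_gammaRatioSq (hx : 0 < x) : x - 1 / 4 < gammaRatioSq x := by
  have hrec := gammaRatioSq_mul_sq hx
  have hle := sub_quarter_le_gammaRatioSq (by linarith : 1 / 2 < x + 1)
  nlinarith [mul_le_mul_of_nonneg_left hle (sq_nonneg x), sq_nonneg (x + 1 / 2)]

theorem gammaRatioSq_lt_self (hx : 0 < x) : gammaRatioSq x < x := by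
  have hrec := gammaRatioSq_mul_sq hx
  have hle := gammaRatioSq_le_self (by linarith : 0 < x + 1)
  nlinarith [mul_le_mul_of_nonneg_left hle (sq_nonneg x), sq_nonneg (x + 1 / 2)]

end

/-- **Remark 2.2.**
For every real `k ≥ 1`, `1/√k < Γ(k/2)/(√2 Γ((k+1)/2)) < 1/√(k - 1/2)`. -/
theorem gamma_ratio_bounds (k : ℝ) (hk : 1 ≤ k) :
    1 / Real.sqrt k < Real.Gamma (k / 2) / (Real.sqrt 2 * Real.Gamma ((k + 1) / 2)) ∧
      Real.Gamma (k / 2) / (Real.sqrt 2 * Real.Gamma ((k + 1) / 2))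
        < 1 / Real.sqrt (k - 1 / 2) := by
  have hx : 0 < k / 2 := by linarith
  have hlower := sub_quarter_lt_gammaRatioSq hx
  have hupper := gammaRatioSq_lt_self hx
  have hratio :
      Gamma (k / 2) / (√2 * Gamma ((k + 1) / 2)) = 1 / √(2 * gammaRatioSq (k / 2)) := by
    have := (Gamma_pos_of_pos hx).ne'
    rw [gammaRatioSq, sqrt_mul zero_le_two, sqrt_sq (by positivity), add_div]
    field_simp
  rw [hratio]
  constructor
  all_goals
    exact one_div_lt_one_div_of_lt (sqrt_pos.2 (by linarith))
      (sqrt_lt_sqrt (by linarith) (by linarith))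
end
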